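/- arXiv:2310.09923 — 2 statements merged into one kernel-verified Lean document; each statement's English description precedes it below -/
import Mathlib

section
/- Let Q be a full Picard subcategory of a Picard category X, and let H be a groupoid on which X acts simply transitively. Then the 2-categorical quotient H/Q is equivalent to a set, and the abelian group X/Q acts simply transitively on this set. -/
/-!
Being related modulo `Q` is an equivalence relation because `Q` contains the unit and is closed
under tensor products and inverses; the braiding lets `Q` be moved past any `x`, so `x · -`
descends to the quotients. Transitivity of the action gives existence of the group element
relating two classes, and fullness of `x ↦ x · h` turns an isomorphism
`(q ⊗ x') · h ≅ x · h` into `q ⊗ x' ≅ x`, which gives uniqueness.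
-/

open CategoryTheory MonoidalCategory

namespace CategoryTheory.MonoidalCategory

variable {X H : Type*} [Category H]

section

variable [Category X] [MonoidalCategory X]

def orbitRel (Q : Set X) (act : X × H ⥤ H) (h₁ h₂ : H) : Prop :=
  ∃ q ∈ Q, Nonempty (act.obj (q, h₁) ≅ h₂)

def tensorOrbitRel (Q : Set X) (x₁ x₂ : X) : Prop :=
  ∃ q ∈ Q, Nonempty (q ⊗ x₁ ≅ x₂)

variable {Q : Set X} {act : X × H ⥤ H}

def actIsoLeft {x x' : X} (e : x ≅ x') (h : H) : act.obj (x, h) ≅ act.obj (x', h) :=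
  act.mapIso (e.prod (Iso.refl h))

def actIsoRight (x : X) {h h' : H} (e : h ≅ h') : act.obj (x, h) ≅ act.obj (x, h') :=
  act.mapIso ((Iso.refl x).prod e)

theorem orbitRel_of_iso (hQone : 𝟙_ X ∈ Q)
    (hunit : ∀ h : H, Nonempty (act.obj (𝟙_ X, h) ≅ h))
    {h₁ h₂ : H} (e : h₁ ≅ h₂) : orbitRel Q act h₁ h₂ :=
  ⟨𝟙_ X, hQone, ⟨(hunit h₁).some ≪≫ e⟩⟩

theorem orbitRel_trans (hQmul : ∀ q q' : X, q ∈ Q → q' ∈ Q → q ⊗ q' ∈ Q)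
    (hassoc : ∀ (x y : X) (h : H),
      Nonempty (act.obj (x ⊗ y, h) ≅ act.obj (x, act.obj (y, h))))
    {h₁ h₂ h₃ : H} :
    orbitRel Q act h₁ h₂ → orbitRel Q act h₂ h₃ → orbitRel Q act h₁ h₃ := by
  rintro ⟨q, hq, ⟨e⟩⟩ ⟨q', hq', ⟨e'⟩⟩
  exact ⟨q' ⊗ q, hQmul q' q hq' hq,
    ⟨(hassoc q' q h₁).some ≪≫ actIsoRight q' e ≪≫ e'⟩⟩

section Braided

variable [BraidedCategory X]

theorem orbitRel_symm (hPic : ∀ x : X, ∃ x' : X, Nonempty (x ⊗ x' ≅ 𝟙_ X))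
    (hQinv : ∀ q q' : X, q ∈ Q → Nonempty (q ⊗ q' ≅ 𝟙_ X) → q' ∈ Q)
    (hunit : ∀ h : H, Nonempty (act.obj (𝟙_ X, h) ≅ h))
    (hassoc : ∀ (x y : X) (h : H),
      Nonempty (act.obj (x ⊗ y, h) ≅ act.obj (x, act.obj (y, h))))
    {h₁ h₂ : H} : orbitRel Q act h₁ h₂ → orbitRel Q act h₂ h₁ := by
  rintro ⟨q, hq, ⟨e⟩⟩
  obtain ⟨q', ⟨e'⟩⟩ := hPic q
  refine ⟨q', hQinv q q' hq ⟨e'⟩, ⟨?_⟩⟩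
  calc act.obj (q', h₂) ≅ act.obj (q', act.obj (q, h₁)) := actIsoRight q' e.symm
    _ ≅ act.obj (q' ⊗ q, h₁) := (hassoc q' q h₁).some.symm
    _ ≅ act.obj (q ⊗ q', h₁) := actIsoLeft (β_ q' q) h₁
    _ ≅ act.obj (𝟙_ X, h₁) := actIsoLeft e' h₁
    _ ≅ h₁ := (hunit h₁).some

theorem orbitRel_equivalence (hPic : ∀ x : X, ∃ x' : X, Nonempty (x ⊗ x' ≅ 𝟙_ X))
    (hQone : 𝟙_ X ∈ Q) (hQmul : ∀ q q' : X, q ∈ Q → q' ∈ Q → q ⊗ q' ∈ Q)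
    (hQinv : ∀ q q' : X, q ∈ Q → Nonempty (q ⊗ q' ≅ 𝟙_ X) → q' ∈ Q)
    (hunit : ∀ h : H, Nonempty (act.obj (𝟙_ X, h) ≅ h))
    (hassoc : ∀ (x y : X) (h : H),
      Nonempty (act.obj (x ⊗ y, h) ≅ act.obj (x, act.obj (y, h)))) :
    _root_.Equivalence (orbitRel Q act) where
  refl h := orbitRel_of_iso hQone hunit (Iso.refl h)
  symm := orbitRel_symm hPic hQinv hunit hassoc
  trans := orbitRel_trans hQmul hassoc

theorem orbitRel.act_obj
    (hassoc : ∀ (x y : X) (h : H),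
      Nonempty (act.obj (x ⊗ y, h) ≅ act.obj (x, act.obj (y, h))))
    (x : X) {h₁ h₂ : H} :
    orbitRel Q act h₁ h₂ → orbitRel Q act (act.obj (x, h₁)) (act.obj (x, h₂)) := by
  rintro ⟨q, hq, ⟨e⟩⟩
  refine ⟨q, hq, ⟨?_⟩⟩
  calc act.obj (q, act.obj (x, h₁)) ≅ act.obj (q ⊗ x, h₁) := (hassoc q x h₁).some.symm
    _ ≅ act.obj (x ⊗ q, h₁) := actIsoLeft (β_ q x) h₁
    _ ≅ act.obj (x, act.obj (q, h₁)) := (hassoc x q h₁).some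
    _ ≅ act.obj (x, h₂) := actIsoRight x e

end Braided

theorem tensorOrbitRel.act_obj
    (hassoc : ∀ (x y : X) (h : H),
      Nonempty (act.obj (x ⊗ y, h) ≅ act.obj (x, act.obj (y, h))))
    {x₁ x₂ : X} (h : H) :
    tensorOrbitRel Q x₁ x₂ → orbitRel Q act (act.obj (x₁, h)) (act.obj (x₂, h)) := by
  rintro ⟨q, hq, ⟨e⟩⟩
  exact ⟨q, hq, ⟨(hassoc q x₁ h).some.symm ≪≫ actIsoLeft e h⟩⟩

end

theorem tensorOrbitRel_of_orbitRel_act [Groupoid X] [MonoidalCategory X]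
    {Q : Set X} {act : X × H ⥤ H}
    (hassoc : ∀ (x y : X) (h : H),
      Nonempty (act.obj (x ⊗ y, h) ≅ act.obj (x, act.obj (y, h))))
    (hfull : ∀ (x₁ x₂ : X) (h : H), Function.Surjective (fun f : (x₁ ⟶ x₂) =>
      act.map ((f, 𝟙 h) : ((x₁, h) : X × H) ⟶ (x₂, h))))
    {x₁ x₂ : X} {h : H} :
    orbitRel Q act (act.obj (x₁, h)) (act.obj (x₂, h)) → tensorOrbitRel Q x₁ x₂ := by
  rintro ⟨q, hq, ⟨e⟩⟩
  obtain ⟨f, -⟩ := hfull (q ⊗ x₁) x₂ h ((hassoc q x₁ h).some ≪≫ e).hom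
  exact ⟨q, hq, ⟨asIso f⟩⟩

end CategoryTheory.MonoidalCategory

theorem stmt2_general {X H : Type*} [Groupoid X] [Groupoid H]
    [MonoidalCategory X] [SymmetricCategory X]
    (hPic : ∀ x : X, ∃ x' : X, Nonempty (x ⊗ x' ≅ 𝟙_ X))
    (Qset : Set X)
    (hQone : 𝟙_ X ∈ Qset)
    (hQmul : ∀ q q' : X, q ∈ Qset → q' ∈ Qset → q ⊗ q' ∈ Qset)
    (hQinv : ∀ q q' : X, q ∈ Qset → Nonempty (q ⊗ q' ≅ 𝟙_ X) → q' ∈ Qset)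
    (act : X × H ⥤ H)
    (hunit : ∀ h : H, Nonempty (act.obj (𝟙_ X, h) ≅ h))
    (hassoc : ∀ (x y : X) (h : H),
      Nonempty (act.obj (x ⊗ y, h) ≅ act.obj (x, act.obj (y, h))))
    (htrans : ∀ h₁ h₂ : H, ∃ x : X, Nonempty (act.obj (x, h₁) ≅ h₂))
    (hff : ∀ (x₁ x₂ : X) (h : H),
      Function.Bijective (fun f : (x₁ ⟶ x₂) =>
        act.map ((f, 𝟙 h) : ((x₁, h) : X × H) ⟶ (x₂, h))))
    (rX : X → X → Prop)
    (hrX : ∀ x₁ x₂ : X, rX x₁ x₂ ↔ ∃ q ∈ Qset, Nonempty ((q ⊗ x₁) ≅ x₂))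
    (rH : H → H → Prop)
    (hrH : ∀ h₁ h₂ : H, rH h₁ h₂ ↔ ∃ q ∈ Qset, Nonempty (act.obj (q, h₁) ≅ h₂)) :
    Equivalence rH ∧
      ∃ smul : Quot rX → Quot rH → Quot rH,
        (∀ (x : X) (h : H),
          smul (Quot.mk rX x) (Quot.mk rH h) = Quot.mk rH (act.obj (x, h))) ∧
        (∀ a b : Quot rH, ∃! g : Quot rX, smul g a = b) := by
  obtain rfl : rX = tensorOrbitRel Qset := funext₂ fun x₁ x₂ => propext (hrX x₁ x₂)
  obtain rfl : rH = orbitRel Qset act := funext₂ fun h₁ h₂ => propext (hrH h₁ h₂)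
  have hequiv := orbitRel_equivalence hPic hQone hQmul hQinv hunit hassoc
  refine ⟨hequiv, Quot.map₂ (fun x h => act.obj (x, h))
    (fun x _ _ => orbitRel.act_obj hassoc x) (fun _ _ h => tensorOrbitRel.act_obj hassoc h),
    fun _ _ => rfl, ?_⟩
  rintro ⟨h₁⟩ ⟨h₂⟩
  obtain ⟨x, ⟨e⟩⟩ := htrans h₁ h₂
  have hx : Quot.mk _ (act.obj (x, h₁)) = Quot.mk (orbitRel Qset act) h₂ :=
    Quot.sound (orbitRel_of_iso hQone hunit e)
  refine ⟨Quot.mk _ x, hx, ?_⟩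
  rintro ⟨x'⟩ hx'
  have hrel : orbitRel Qset act (act.obj (x', h₁)) (act.obj (x, h₁)) :=
    hequiv.eqvGen_iff.mp (Quot.eqvGen_exact (hx'.trans hx.symm))
  exact Quot.sound (tensorOrbitRel_of_orbitRel_act hassoc (fun _ _ _ => (hff _ _ _).2) hrel)

/-- let `Q` be a full Picard subcategory of a Picard category `X` (a symmetric
monoidal groupoid with all objects invertible, `Q` determined by a class of objects `Qset`
containing the unit and closed under tensor, inverses and isomorphism), and let `H` be a
groupoid on which `X` acts simply transitively: the action functor `act : X × H ⥤ H` is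
compatible with the tensor structure, is transitive (`∀ h₁ h₂, ∃ x, x·h₁ ≅ h₂`), and for all
`x₁, x₂, h` the map `Hom_X(x₁, x₂) → Hom_H(x₁·h, x₂·h)` is bijective.  Then the relation
`rH` on `H` identifying `h₁ ∼ h₂` when there are `q` in `Q` and a morphism `q·h₁ → h₂` is an
equivalence relation — so the 2-categorical quotient `H/Q` is equivalent to the set
`Quot rH` — and the abelian group `X/Q = Quot rX` (from the previous lemma) acts on it,
the action being induced by `act` and simply transitive. -/
theorem stmt2 {X H : Type*} [Groupoid X] [Groupoid H]
    [MonoidalCategory X] [SymmetricCategory X]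
    (hPic : ∀ x : X, ∃ x' : X, Nonempty (x ⊗ x' ≅ 𝟙_ X))
    (Qset : Set X)
    (hQone : 𝟙_ X ∈ Qset)
    (hQmul : ∀ q q' : X, q ∈ Qset → q' ∈ Qset → q ⊗ q' ∈ Qset)
    (hQinv : ∀ q q' : X, q ∈ Qset → Nonempty (q ⊗ q' ≅ 𝟙_ X) → q' ∈ Qset)
    (hQiso : ∀ q x : X, q ∈ Qset → Nonempty (q ≅ x) → x ∈ Qset)
    (act : X × H ⥤ H)
    (hunit : ∀ h : H, Nonempty (act.obj (𝟙_ X, h) ≅ h))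
    (hassoc : ∀ (x y : X) (h : H),
      Nonempty (act.obj (x ⊗ y, h) ≅ act.obj (x, act.obj (y, h))))
    (htrans : ∀ h₁ h₂ : H, ∃ x : X, Nonempty (act.obj (x, h₁) ≅ h₂))
    (hff : ∀ (x₁ x₂ : X) (h : H),
      Function.Bijective (fun f : (x₁ ⟶ x₂) =>
        act.map ((f, 𝟙 h) : ((x₁, h) : X × H) ⟶ (x₂, h))))
    (rX : X → X → Prop)
    (hrX : ∀ x₁ x₂ : X, rX x₁ x₂ ↔ ∃ q ∈ Qset, Nonempty ((q ⊗ x₁) ≅ x₂))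
    (rH : H → H → Prop)
    (hrH : ∀ h₁ h₂ : H, rH h₁ h₂ ↔ ∃ q ∈ Qset, Nonempty (act.obj (q, h₁) ≅ h₂)) :
    Equivalence rH ∧
      ∃ smul : Quot rX → Quot rH → Quot rH,
        (∀ (x : X) (h : H),
          smul (Quot.mk rX x) (Quot.mk rH h) = Quot.mk rH (act.obj (x, h))) ∧
        (∀ a b : Quot rH, ∃! g : Quot rX, smul g a = b) :=
  stmt2_general hPic Qset hQone hQmul hQinv act hunit hassoc htrans hff rX hrX rH hrH
end

section
/- Let g be a simple Lie algebra over an algebraically closed field of characteristic zero that is not of type D_{2n}. Then the exponents of g are pairwise distinct, and consequently the decomposition of g into irreducible representations under a principal sl_2-triple is multiplicity-free: the rank-many irreducible summands are pairwise nonisomorphic. -/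
/-- The Dynkin type of a simple Lie algebra (over an algebraically closed field of
characteristic zero), with the rank as parameter for the classical series. -/
inductive SimpleLieType
  | A (r : ℕ)
  | B (r : ℕ)
  | C (r : ℕ)
  | D (r : ℕ)
  | E6 | E7 | E8 | F4 | G2

/-- The multiset of exponents `m_1, …, m_r` of a simple Lie algebra of the given type
(`r` = rank), as computed in the standard tables: under a principal `sl_2`-triple the Lie
algebra decomposes as `⊕_{i=1}^r V(2 m_i)` (Kostant). -/
def exponents : SimpleLieType → Multiset ℕ
  | .A r => (Multiset.range r).map (· + 1)
  | .B r => (Multiset.range r).map (fun i => 2 * i + 1)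
  | .C r => (Multiset.range r).map (fun i => 2 * i + 1)
  | .D r => (Multiset.range (r - 1)).map (fun i => 2 * i + 1) + {r - 1}
  | .E6 => {1, 4, 5, 7, 8, 11}
  | .E7 => {1, 5, 7, 9, 11, 13, 17}
  | .E8 => {1, 7, 11, 13, 17, 19, 23, 29}
  | .F4 => {1, 5, 7, 11}
  | .G2 => {1, 5}

/-!
Outside type `D` the exponents are visibly distinct: an arithmetic progression or one of the
finite tables. In type `D_r` they are the odd numbers `1, 3, …, 2r - 3` together with `r - 1`,
and for odd `r` the extra exponent `r - 1` is even. Distinct exponents give distinct dimensions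
`2 m + 1` of the summands.
-/

theorem nodup_range_map_two_mul_add_one (r : ℕ) :
    ((Multiset.range r).map fun i => 2 * i + 1).Nodup :=
  (Multiset.nodup_range r).map fun _ _ hij => by omega

theorem nodup_exponents_D {r : ℕ} (hr : Odd r) : (exponents (.D r)).Nodup := by
  refine Multiset.nodup_add.mpr
    ⟨nodup_range_map_two_mul_add_one _, Multiset.nodup_singleton _, ?_⟩
  obtain ⟨k, rfl⟩ := hr
  simp only [Multiset.disjoint_singleton, Multiset.mem_map, not_exists, not_and]
  intro i _ hi
  omega

theorem nodup_exponents (t : SimpleLieType) (h : ∀ n : ℕ, t ≠ .D (2 * n)) :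
    (exponents t).Nodup := by
  cases t with
  | A r => exact (Multiset.nodup_range r).map (add_left_injective 1)
  | B r | C r => exact nodup_range_map_two_mul_add_one r
  | D r =>
    exact nodup_exponents_D <| Nat.not_even_iff_odd.mp fun ⟨n, hn⟩ => h n (by rw [hn, two_mul])
  | E6 | E7 | E8 | F4 | G2 => decide

/-- if the simple Lie algebra `g` is not of type `D_{2n}`, then its exponents
are pairwise distinct; consequently the decomposition `g ≅ ⊕_{i=1}^r V(2 m_i)` of `g` under a
principal `sl_2`-triple is multiplicity-free: the rank-many irreducible summands are pairwise
nonisomorphic, since the dimensions `2 m_i + 1` of the summands are pairwise distinct. -/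
theorem stmt11 (t : SimpleLieType) (h : ∀ n : ℕ, t ≠ .D (2 * n)) :
    (exponents t).Nodup ∧ ((exponents t).map (fun m => 2 * m + 1)).Nodup := by
  have hnodup := nodup_exponents t h
  exact ⟨hnodup, hnodup.map fun _ _ hm => by omega⟩
end
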